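/- Let X be a Markov random field on a chordal graph 𝒢=(V,E), let v_1,…,v_N be a permutation of the vertices such that H(X) = Σ_{i=1}^N H(X_{v_i}|X_{A_{v_i}}) with A_{v_i} := N_{v_i} ∩ {v_1,…,v_{i-1}}, and assume that for each i the random variable Y_{v_i}=g_{v_i}(X_{v_i}) is conditionally independent of Y_{\{v_1,…,v_{i-1}\}} given X_{A_{v_i}}. Then H(X) ≤ Σ_{i=1}^N H(X_{v_i} | X_{A_{v_i}}, Y_{v_i}) + H(Y). -/

import Mathlib

open scoped Classical

/-!
Basic framework: tuples of finitely-valued random variables indexed by the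
vertex set `Fin N`, joint PMFs as real-valued functions, pushforward
distributions, Shannon entropy, conditional entropy, marginals, and Markov
random fields on simple graphs.
-/

variable {N : ℕ}

/-- The distribution of the discrete random variable `f` when the underlying
configuration `x` is distributed according to the joint PMF `p`. -/
noncomputable def dist {𝒳 : Fin N → Type*} [∀ i, Fintype (𝒳 i)] {β : Type*}
    (p : (∀ i, 𝒳 i) → ℝ) (f : (∀ i, 𝒳 i) → β) : β → ℝ :=
  fun b => ∑ x : ∀ i, 𝒳 i, if f x = b then p x else 0

/-- Shannon entropy `H(f)` of the random variable `f` under the joint PMF `p`. -/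
noncomputable def ent {𝒳 : Fin N → Type*} [∀ i, Fintype (𝒳 i)] {β : Type*} [Fintype β]
    (p : (∀ i, 𝒳 i) → ℝ) (f : (∀ i, 𝒳 i) → β) : ℝ :=
  ∑ b : β, Real.negMulLog (dist p f b)

/-- Conditional Shannon entropy `H(f | h) := H(f, h) - H(h)`. -/
noncomputable def condEnt {𝒳 : Fin N → Type*} [∀ i, Fintype (𝒳 i)] {β γ : Type*}
    [Fintype β] [Fintype γ]
    (p : (∀ i, 𝒳 i) → ℝ) (f : (∀ i, 𝒳 i) → β) (h : (∀ i, 𝒳 i) → γ) : ℝ :=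
  ent p (fun x => (f x, h x)) - ent p h

/-- Restriction of a configuration to the coordinates in `A` (i.e. `x_A`). -/
def restr {𝒳 : Fin N → Type*} (A : Finset (Fin N)) (x : ∀ i, 𝒳 i) : ∀ i : A, 𝒳 i.1 :=
  fun i => x i.1

/-- The marginal PMF of the coordinates in `A`, evaluated at `x_A`. -/
noncomputable def margin {𝒳 : Fin N → Type*} [∀ i, Fintype (𝒳 i)]
    (p : (∀ i, 𝒳 i) → ℝ) (A : Finset (Fin N)) (x : ∀ i, 𝒳 i) : ℝ :=
  dist p (restr A) (restr A x)

/-- The neighbors `N_i` of vertex `i` in the graph `G`. -/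
noncomputable def nbr (G : SimpleGraph (Fin N)) (i : Fin N) : Finset (Fin N) :=
  Finset.univ.filter (fun j => G.Adj i j)

/-- `p` is (the joint PMF of) a Markov random field on `G`: for every vertex `i`,
the conditional PMF of `X_i` given `X_{V∖{i}}` equals the conditional PMF of `X_i`
given `X_{N_i}`, expressed in cross-multiplied form (conditional independence of
`X_i` and `X_{V∖({i}∪N_i)}` given `X_{N_i}`). -/
def IsMRF {𝒳 : Fin N → Type*} [∀ i, Fintype (𝒳 i)]
    (G : SimpleGraph (Fin N)) (p : (∀ i, 𝒳 i) → ℝ) : Prop :=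
  ∀ (i : Fin N) (x : ∀ j, 𝒳 j),
    p x * margin p (nbr G i) x
      = margin p (Finset.univ.erase i) x * margin p (insert i (nbr G i)) x

/-- Coordinate-wise application of the functions `g_i`: `g(x) = (g_i(x_i), i ∈ V)`. -/
def gmap {𝒳 𝒴 : Fin N → Type*} (g : ∀ i, 𝒳 i → 𝒴 i) (x : ∀ i, 𝒳 i) : ∀ i, 𝒴 i :=
  fun i => g i (x i)

/-- The set `𝒞` of cliques of `G`: subsets all of whose two-element subsets are
edges (this includes all singletons). -/
noncomputable def cliques (G : SimpleGraph (Fin N)) : Finset (Finset (Fin N)) :=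
  Finset.univ.filter (fun C => G.IsClique (C : Set (Fin N)))

/-- `ψ` (a potential defined on all of `𝒳`) depends only on the coordinates in `C`. -/
def localTo {𝒳 : Fin N → Type*} (C : Finset (Fin N)) (ψ : (∀ i, 𝒳 i) → ℝ) : Prop :=
  ∀ x x' : ∀ i, 𝒳 i, (∀ i ∈ C, x i = x' i) → ψ x = ψ x'

/-- The potential `ψ` depends on the coordinate `x_i` only via `y_i = g_i(x_i)`:
changing `x_i` within a preimage `g_i⁻¹(y_i)` does not change the value of `ψ`.
The negation of this is "`ψ` strictly depends on `x_i`". -/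
def onlyVia {𝒳 𝒴 : Fin N → Type*} (g : ∀ i, 𝒳 i → 𝒴 i) (i : Fin N)
    (ψ : (∀ j, 𝒳 j) → ℝ) : Prop :=
  ∀ (x : ∀ j, 𝒳 j) (xi' : 𝒳 i), g i xi' = g i (x i) →
    ψ (Function.update x i xi') = ψ x

/-- `G` is chordal: every induced cycle of `G` has length three, i.e. there is no
induced (embedded) cycle of length at least four. -/
def IsChordal {V : Type*} (G : SimpleGraph V) : Prop :=
  ∀ n : ℕ, 3 < n → IsEmpty (SimpleGraph.cycleGraph n ↪g G)

/-- Given a permutation `v` of the vertices, `A_{v_i} := N_{v_i} ∩ {v_1, …, v_{i-1}}`. -/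
noncomputable def Aset (G : SimpleGraph (Fin N)) (v : Equiv.Perm (Fin N)) (i : Fin N) :
    Finset (Fin N) :=
  nbr G (v i) ∩ (Finset.Iio i).image v

/-!
Since `Y_{v_i}` is a function of `X_{v_i}`,
`H(X_{v_i} | X_{A_{v_i}}) = H(X_{v_i} | X_{A_{v_i}}, Y_{v_i}) + H(Y_{v_i} | X_{A_{v_i}})`.
The conditional independence gives
`H(Y_{v_i} | X_{A_{v_i}}) = H(Y_{v_i} | Y_{<i}, X_{A_{v_i}}) ≤ H(Y_{v_i} | Y_{<i})`,
and the last terms add up to `H(Y)` by the chain rule. Both entropy facts used here,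
equality under conditional independence and submodularity, come from comparing the law
`q(a,b,c)` of a triple `(A, B, C)` with `q(a,c) q(b,c) / q(c)`: under conditional
independence the two agree, and in general Gibbs' inequality compares them.
-/

theorem sum_mul_log_le_sum_mul_log {ι : Type*} [Fintype ι] (q r : ι → ℝ)
    (hq : ∀ i, 0 ≤ q i) (hr : ∀ i, 0 ≤ r i) (hqr : ∀ i, 0 < q i → 0 < r i)
    (hq1 : ∑ i, q i = 1) (hr1 : ∑ i, r i ≤ 1) :
    ∑ i, q i * Real.log (r i) ≤ ∑ i, q i * Real.log (q i) := by
  have key : ∀ i, q i * Real.log (r i) - q i * Real.log (q i) ≤ r i - q i := by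
    intro i
    rcases (hq i).eq_or_lt with h | h
    · simpa [← h] using hr i
    · have hlog := Real.log_le_sub_one_of_pos (div_pos (hqr i h) h)
      rw [Real.log_div (hqr i h).ne' h.ne'] at hlog
      have := mul_le_mul_of_nonneg_left hlog h.le
      simp only [mul_sub, mul_one, mul_div_cancel₀ _ h.ne'] at this
      linarith
  have := Finset.sum_le_sum fun i (_ : i ∈ Finset.univ) => key i
  rw [Finset.sum_sub_distrib, Finset.sum_sub_distrib, hq1] at this
  linarith

section Entropy

variable {𝒳 : Fin N → Type*} [∀ i, Fintype (𝒳 i)] (p : (∀ i, 𝒳 i) → ℝ) {α β γ : Type*}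

theorem sum_dist_mul [Fintype β] (f : (∀ i, 𝒳 i) → β) (φ : β → ℝ) :
    ∑ b, dist p f b * φ b = ∑ x, p x * φ (f x) := by
  simp only [_root_.dist, Finset.sum_mul, ite_mul, zero_mul]
  rw [Finset.sum_comm]
  simp

theorem sum_dist [Fintype β] (f : (∀ i, 𝒳 i) → β) : ∑ b, dist p f b = ∑ x, p x := by
  simpa using sum_dist_mul p f 1

theorem dist_apply_nonneg (hp : ∀ x, 0 ≤ p x) (f : (∀ i, 𝒳 i) → β) (b : β) :
    0 ≤ dist p f b :=
  Finset.sum_nonneg fun x _ => by split_ifs <;> simp [hp x]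

theorem le_dist_apply_self (hp : ∀ x, 0 ≤ p x) (f : (∀ i, 𝒳 i) → β) (x : ∀ i, 𝒳 i) :
    p x ≤ dist p f (f x) := by
  have := Finset.single_le_sum (fun y _ => (by split_ifs <;> simp [hp y] :
    0 ≤ if f y = f x then p y else 0)) (Finset.mem_univ x)
  simpa [_root_.dist] using this

theorem exists_pos_of_dist_pos {f : (∀ i, 𝒳 i) → β} {b : β} (h : 0 < dist p f b) :
    ∃ x, f x = b ∧ 0 < p x := by
  obtain ⟨x, -, hx⟩ := Finset.exists_lt_of_sum_lt (by simpa [_root_.dist] using h :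
    ∑ _x : ∀ i, 𝒳 i, (0 : ℝ) < ∑ x, if f x = b then p x else 0)
  split_ifs at hx with hfx
  exacts [⟨x, hfx, hx⟩, absurd hx (lt_irrefl 0)]

theorem sum_dist_pair_fst [Fintype α] (F : (∀ i, 𝒳 i) → α) (H : (∀ i, 𝒳 i) → γ) (c : γ) :
    ∑ a, dist p (fun x => (F x, H x)) (a, c) = dist p H c := by
  simp only [_root_.dist]
  rw [Finset.sum_comm]
  simp [Prod.ext_iff, ite_and]

theorem ent_eq_neg_sum_mul_log [Fintype β] (f : (∀ i, 𝒳 i) → β) :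
    ent p f = -∑ x, p x * Real.log (dist p f (f x)) := by
  rw [← sum_dist_mul p f fun b => Real.log (dist p f b), ent, ← Finset.sum_neg_distrib]
  simp [Real.negMulLog]

theorem ent_congr [Fintype β] [Fintype γ] {f : (∀ i, 𝒳 i) → β} {h : (∀ i, 𝒳 i) → γ}
    (hfh : ∀ x y, f x = f y ↔ h x = h y) : ent p f = ent p h := by
  simp only [ent_eq_neg_sum_mul_log, _root_.dist, hfh]

theorem ent_eq_zero_of_forall_eq [Fintype β] (hsum : ∑ x, p x = 1) {f : (∀ i, 𝒳 i) → β}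
    (hf : ∀ x y, f x = f y) : ent p f = 0 := by
  have h1 : ∀ x, dist p f (f x) = 1 := fun x => by simp [_root_.dist, hf _ x, hsum]
  simp [ent_eq_neg_sum_mul_log, h1]

end Entropy

section Triple

variable {𝒳 : Fin N → Type*} [∀ i, Fintype (𝒳 i)] (p : (∀ i, 𝒳 i) → ℝ)
  {α β γ : Type*} (A : (∀ i, 𝒳 i) → α) (B : (∀ i, 𝒳 i) → β) (C : (∀ i, 𝒳 i) → γ)

noncomputable def condIndepLaw (t : α × β × γ) : ℝ :=
  dist p (fun x => (A x, C x)) (t.1, t.2.2) * dist p (fun x => (B x, C x)) (t.2.1, t.2.2)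
    / dist p C t.2.2

theorem condIndepLaw_nonneg (hp : ∀ x, 0 ≤ p x) (t : α × β × γ) : 0 ≤ condIndepLaw p A B C t :=
  div_nonneg (mul_nonneg (dist_apply_nonneg p hp _ _) (dist_apply_nonneg p hp _ _))
    (dist_apply_nonneg p hp _ _)

theorem condIndepLaw_pos (hp : ∀ x, 0 ≤ p x) {x : ∀ i, 𝒳 i} (hx : 0 < p x) :
    0 < condIndepLaw p A B C (A x, B x, C x) :=
  div_pos (mul_pos (hx.trans_le (le_dist_apply_self p hp _ x))
    (hx.trans_le (le_dist_apply_self p hp _ x))) (hx.trans_le (le_dist_apply_self p hp C x))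

variable [Fintype α] [Fintype β] [Fintype γ]

theorem sum_condIndepLaw_le (hp : ∀ x, 0 ≤ p x) (hsum : ∑ x, p x = 1) :
    ∑ t, condIndepLaw p A B C t ≤ 1 :=
  calc ∑ t, condIndepLaw p A B C t
      = ∑ a, ∑ c, dist p (fun x => (A x, C x)) (a, c)
          * ((∑ b, dist p (fun x => (B x, C x)) (b, c)) / dist p C c) := by
        simp only [Fintype.sum_prod_type, condIndepLaw, Finset.sum_div, Finset.mul_sum]
        refine Finset.sum_congr rfl fun a _ => Finset.sum_comm.trans ?_
        simp only [mul_div_assoc]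
    _ ≤ ∑ a, ∑ c, dist p (fun x => (A x, C x)) (a, c) := by
        gcongr with a _ c _
        rw [sum_dist_pair_fst]
        exact mul_le_of_le_one_right (dist_apply_nonneg p hp _ _) (div_self_le_one _)
    _ = 1 := by rw [← Fintype.sum_prod_type', sum_dist, hsum]

theorem sum_mul_log_condIndepLaw (hp : ∀ x, 0 ≤ p x) :
    ∑ x, p x * Real.log (condIndepLaw p A B C (A x, B x, C x))
      = ent p C - ent p (fun x => (A x, C x)) - ent p (fun x => (B x, C x)) := by
  have hlog : ∀ x, p x * Real.log (condIndepLaw p A B C (A x, B x, C x))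
      = p x * Real.log (dist p (fun x => (A x, C x)) (A x, C x))
        + p x * Real.log (dist p (fun x => (B x, C x)) (B x, C x))
        - p x * Real.log (dist p C (C x)) := by
    intro x
    rcases (hp x).eq_or_lt with h | h
    · simp [← h]
    have hAC := h.trans_le (le_dist_apply_self p hp (fun x => (A x, C x)) x)
    have hBC := h.trans_le (le_dist_apply_self p hp (fun x => (B x, C x)) x)
    have hC := h.trans_le (le_dist_apply_self p hp C x)
    rw [condIndepLaw, Real.log_div (mul_pos hAC hBC).ne' hC.ne',
      Real.log_mul hAC.ne' hBC.ne']
    ring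
  simp only [hlog, Finset.sum_sub_distrib, Finset.sum_add_distrib, ent_eq_neg_sum_mul_log p]
  ring

theorem ent_triple_add_ent_eq_of_condIndep (hp : ∀ x, 0 ≤ p x)
    (hci : ∀ a b c, dist p (fun x => (A x, B x, C x)) (a, b, c) * dist p C c
      = dist p (fun x => (A x, C x)) (a, c) * dist p (fun x => (B x, C x)) (b, c)) :
    ent p (fun x => (A x, B x, C x)) + ent p C
      = ent p (fun x => (A x, C x)) + ent p (fun x => (B x, C x)) := by
  have hlaw : ∀ x, p x * Real.log (dist p (fun x => (A x, B x, C x)) (A x, B x, C x))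
      = p x * Real.log (condIndepLaw p A B C (A x, B x, C x)) := by
    intro x
    rcases (hp x).eq_or_lt with h | h
    · simp [← h]
    congr 2
    rw [condIndepLaw, eq_div_iff (h.trans_le (le_dist_apply_self p hp C x)).ne', hci]
  have := sum_mul_log_condIndepLaw p A B C hp
  rw [ent_eq_neg_sum_mul_log p (fun x => (A x, B x, C x)), Finset.sum_congr rfl fun x _ => hlaw x]
  linarith

theorem ent_triple_add_ent_le (hp : ∀ x, 0 ≤ p x) (hsum : ∑ x, p x = 1) :
    ent p (fun x => (A x, B x, C x)) + ent p C
      ≤ ent p (fun x => (A x, C x)) + ent p (fun x => (B x, C x)) := by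
  have hgibbs := sum_mul_log_le_sum_mul_log _ _ (dist_apply_nonneg p hp _)
    (condIndepLaw_nonneg p A B C hp)
    (fun t ht => by
      obtain ⟨x, rfl, hx⟩ := exists_pos_of_dist_pos p ht
      exact condIndepLaw_pos p A B C hp hx)
    (by rw [sum_dist, hsum]) (sum_condIndepLaw_le p A B C hp hsum)
  rw [sum_dist_mul p _ fun t => Real.log (condIndepLaw p A B C t),
    sum_dist_mul p _ fun t => Real.log (dist p (fun x => (A x, B x, C x)) t),
    sum_mul_log_condIndepLaw p A B C hp] at hgibbs
  rw [ent_eq_neg_sum_mul_log p (fun x => (A x, B x, C x))]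
  linarith

theorem condEnt_eq_condEnt_pair_of_condIndep (hp : ∀ x, 0 ≤ p x)
    (hci : ∀ a b c, dist p (fun x => (A x, B x, C x)) (a, b, c) * dist p C c
      = dist p (fun x => (A x, C x)) (a, c) * dist p (fun x => (B x, C x)) (b, c)) :
    condEnt p A C = condEnt p A (fun x => (B x, C x)) := by
  have := ent_triple_add_ent_eq_of_condIndep p A B C hp hci
  unfold condEnt
  linarith

theorem condEnt_pair_le (hp : ∀ x, 0 ≤ p x) (hsum : ∑ x, p x = 1) :
    condEnt p A (fun x => (B x, C x)) ≤ condEnt p A B := by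
  have := ent_triple_add_ent_le p A C B hp hsum
  have hACB : ent p (fun x => (A x, C x, B x)) = ent p (fun x => (A x, B x, C x)) :=
    ent_congr p fun x y => by simp only [Prod.mk.injEq]; tauto
  have hCB : ent p (fun x => (C x, B x)) = ent p (fun x => (B x, C x)) :=
    ent_congr p fun x y => by simp only [Prod.mk.injEq]; tauto
  unfold condEnt
  linarith

theorem condEnt_eq_condEnt_add_condEnt_comp {δ : Type*} [Fintype δ] (φ : α → δ) :
    condEnt p A C = condEnt p A (fun x => (C x, φ (A x))) + condEnt p (fun x => φ (A x)) C := by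
  have hAC : ent p (fun x => (A x, C x, φ (A x))) = ent p (fun x => (A x, C x)) :=
    ent_congr p fun x y => by
      simp only [Prod.mk.injEq]
      exact ⟨fun h => ⟨h.1, h.2.1⟩, fun h => ⟨h.1, h.2, congrArg φ h.1⟩⟩
  have hCA : ent p (fun x => (C x, φ (A x))) = ent p (fun x => (φ (A x), C x)) :=
    ent_congr p fun x y => by simp only [Prod.mk.injEq]; tauto
  unfold condEnt
  linarith

end Triple

theorem restr_eq_restr_iff {𝒳 : Fin N → Type*} {A : Finset (Fin N)} {x y : ∀ i, 𝒳 i} :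
    restr A x = restr A y ↔ ∀ j ∈ A, x j = y j := by
  simp [funext_iff, restr]

theorem sum_condEnt_restr_image_Iio {𝒳 𝒴 : Fin N → Type*} [∀ i, Fintype (𝒳 i)]
    [∀ i, Fintype (𝒴 i)] (p : (∀ i, 𝒳 i) → ℝ) (hsum : ∑ x, p x = 1)
    (Y : (∀ i, 𝒳 i) → ∀ j, 𝒴 j) (v : Equiv.Perm (Fin N)) :
    ∑ i, condEnt p (fun x => Y x (v i)) (fun x => restr ((Finset.Iio i).image v) (Y x))
      = ent p Y := by
  let T : ℕ → Finset (Fin N) := fun k => Finset.univ.filter fun j => (v.symm j : ℕ) < k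
  let F : ℕ → ℝ := fun k => ent p fun x => restr (T k) (Y x)
  have hT : ∀ i : Fin N, (Finset.Iio i).image v = T i := by
    intro i
    ext j
    simp only [T, Finset.mem_image, Finset.mem_Iio, Finset.mem_filter, Finset.mem_univ, true_and,
      Fin.val_fin_lt]
    exact ⟨fun ⟨a, ha, hj⟩ => by simpa [← hj] using ha, fun h => ⟨_, h, v.apply_symm_apply j⟩⟩
  have hTsucc : ∀ i : Fin N, T (i + 1) = insert (v i) (T i) := by
    intro i
    ext j
    simp [T, le_iff_eq_or_lt, Fin.val_inj, Equiv.symm_apply_eq]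
  have hstep : ∀ i : Fin N,
      condEnt p (fun x => Y x (v i)) (fun x => restr (T i) (Y x)) = F (i + 1) - F i := by
    intro i
    unfold condEnt
    congr 1
    exact ent_congr p fun x y => by
      simp only [Prod.mk.injEq, restr_eq_restr_iff, hTsucc, Finset.forall_mem_insert]
  have hF0 : F 0 = 0 :=
    ent_eq_zero_of_forall_eq p hsum fun x y => restr_eq_restr_iff.2 (by simp [T])
  have hFN : F N = ent p Y :=
    ent_congr p fun x y => by rw [restr_eq_restr_iff, funext_iff]; simp [T]
  calc _ = ∑ i : Fin N, (F (i + 1) - F i) :=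
        Finset.sum_congr rfl fun i _ => by rw [hT, hstep]
    _ = F N - F 0 := by
        rw [Fin.sum_univ_eq_sum_range (fun k => F (k + 1) - F k), Finset.sum_range_sub]
    _ = ent p Y := by rw [hF0, hFN, sub_zero]

theorem entropy_le_of_condIndep_general {𝒳 𝒴 : Fin N → Type*}
    [∀ i, Fintype (𝒳 i)] [∀ i, Fintype (𝒴 i)]
    (G : SimpleGraph (Fin N))
    (p : (∀ i, 𝒳 i) → ℝ)
    (hnn : ∀ x, 0 ≤ p x) (hsum : ∑ x : ∀ i, 𝒳 i, p x = 1)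
    (g : ∀ i, 𝒳 i → 𝒴 i)
    (v : Equiv.Perm (Fin N))
    (hdecomp : ent p id
      = ∑ i : Fin N, condEnt p (fun x => x (v i)) (restr (Aset G v i)))
    (hCI : ∀ (i : Fin N) (a : 𝒴 (v i))
        (b : ∀ j : ((Finset.Iio i).image v : Finset (Fin N)), 𝒴 j.1)
        (c : ∀ j : (Aset G v i : Finset (Fin N)), 𝒳 j.1),
      dist p (fun x => (g (v i) (x (v i)),
            restr ((Finset.Iio i).image v) (gmap g x), restr (Aset G v i) x))
          (a, b, c)
        * dist p (restr (Aset G v i)) c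
      = dist p (fun x => (g (v i) (x (v i)), restr (Aset G v i) x)) (a, c)
        * dist p (fun x => (restr ((Finset.Iio i).image v) (gmap g x),
              restr (Aset G v i) x)) (b, c)) :
    ent p id
      ≤ (∑ i : Fin N, condEnt p (fun x => x (v i))
          (fun x => (restr (Aset G v i) x, g (v i) (x (v i)))))
        + ent p (gmap g) := by
  have hstep : ∀ i : Fin N, condEnt p (fun x => x (v i)) (restr (Aset G v i))
      ≤ condEnt p (fun x => x (v i)) (fun x => (restr (Aset G v i) x, g (v i) (x (v i))))
        + condEnt p (fun x => gmap g x (v i))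
            (fun x => restr ((Finset.Iio i).image v) (gmap g x)) := by
    intro i
    rw [condEnt_eq_condEnt_add_condEnt_comp p _ _ (g (v i)),
      condEnt_eq_condEnt_pair_of_condIndep p _ _ _ hnn (hCI i)]
    gcongr
    exact condEnt_pair_le p _ _ _ hnn hsum
  rw [hdecomp, ← sum_condEnt_restr_image_Iio p hsum (gmap g) v, ← Finset.sum_add_distrib]
  exact Finset.sum_le_sum fun i _ => hstep i

/-- Let `X` be a MRF on the chordal graph `𝒢`, let `v_1,…,v_N`
be a vertex permutation along which `H(X) = Σ_i H(X_{v_i} | X_{A_{v_i}})` with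
`A_{v_i} = N_{v_i} ∩ {v_1,…,v_{i-1}}`, and assume that for each `i` the random
variable `Y_{v_i} = g_{v_i}(X_{v_i})` is conditionally independent of
`Y_{{v_1,…,v_{i-1}}}` given `X_{A_{v_i}}`. Then
`H(X) ≤ Σ_{i=1}^N H(X_{v_i} | X_{A_{v_i}}, Y_{v_i}) + H(Y)`. -/
theorem entropy_le_of_condIndep {𝒳 𝒴 : Fin N → Type*}
    [∀ i, Fintype (𝒳 i)] [∀ i, Fintype (𝒴 i)]
    (G : SimpleGraph (Fin N)) (hchordal : IsChordal G)
    (p : (∀ i, 𝒳 i) → ℝ)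
    (hnn : ∀ x, 0 ≤ p x) (hsum : ∑ x : ∀ i, 𝒳 i, p x = 1)
    (hMRF : IsMRF G p)
    (g : ∀ i, 𝒳 i → 𝒴 i)
    (v : Equiv.Perm (Fin N))
    (hdecomp : ent p id
      = ∑ i : Fin N, condEnt p (fun x => x (v i)) (restr (Aset G v i)))
    (hCI : ∀ (i : Fin N) (a : 𝒴 (v i))
        (b : ∀ j : ((Finset.Iio i).image v : Finset (Fin N)), 𝒴 j.1)
        (c : ∀ j : (Aset G v i : Finset (Fin N)), 𝒳 j.1),
      dist p (fun x => (g (v i) (x (v i)),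
            restr ((Finset.Iio i).image v) (gmap g x), restr (Aset G v i) x))
          (a, b, c)
        * dist p (restr (Aset G v i)) c
      = dist p (fun x => (g (v i) (x (v i)), restr (Aset G v i) x)) (a, c)
        * dist p (fun x => (restr ((Finset.Iio i).image v) (gmap g x),
              restr (Aset G v i) x)) (b, c)) :
    ent p id
      ≤ (∑ i : Fin N, condEnt p (fun x => x (v i))
          (fun x => (restr (Aset G v i) x, g (v i) (x (v i)))))
        + ent p (gmap g) :=
  entropy_le_of_condIndep_general G p hnn hsum g v hdecomp hCI
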